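/- arXiv:1408.3365 — 5 statements merged into one kernel-verified Lean document; each statement's English description precedes it below -/
import Mathlib

section
/- Let V be a finite-dimensional vector space over a field K, let d ≥ 0, and let N : V → V be a linear endomorphism with N^{d+1} = 0. Suppose dim V = (d+1)·μ and rank(N^d) = μ for some natural number μ. Then for every r with 0 ≤ r ≤ d+1, rank(N^r) = (d+1−r)·μ. -/
open Module LinearMap

private lemma rank_step {K V : Type*} [Field K] [AddCommGroup V] [Module K V]
    [FiniteDimensional K V] (N : V →ₗ[K] V) (r : ℕ) :
    finrank K (LinearMap.range (N ^ (r + 1))) +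
      finrank K ((LinearMap.ker N ⊓ LinearMap.range (N ^ r)) : Submodule K V) =
      finrank K (LinearMap.range (N ^ r)) := by
  set S := LinearMap.range (N ^ r) with hS
  set L : S →ₗ[K] V := N.comp S.subtype with hL
  have h1 : LinearMap.range L = LinearMap.range (N ^ (r + 1)) := by
    rw [hL, LinearMap.range_comp, Submodule.range_subtype, pow_succ' N r,
      Module.End.mul_eq_comp, LinearMap.range_comp]
  have h2 : LinearMap.ker L = Submodule.comap S.subtype (LinearMap.ker N ⊓ S) := by
    rw [hL, LinearMap.ker_comp, Submodule.comap_inf, Submodule.comap_subtype_self, inf_top_eq]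
  have h3 : finrank K (LinearMap.ker L) =
      finrank K ((LinearMap.ker N ⊓ S) : Submodule K V) := by
    rw [h2]
    exact LinearEquiv.finrank_eq (Submodule.comapSubtypeEquivOfLe inf_le_right)
  have := LinearMap.finrank_range_add_finrank_ker L
  rw [h1, h3] at this
  simpa [hS] using this

theorem stmt0 {K V : Type*} [Field K] [AddCommGroup V] [Module K V]
    [FiniteDimensional K V] (d μ : ℕ) (N : V →ₗ[K] V)
    (hN : N ^ (d + 1) = 0)
    (hdim : Module.finrank K V = (d + 1) * μ)
    (hrank : Module.finrank K (LinearMap.range (N ^ d)) = μ) :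
    ∀ r ≤ d + 1, Module.finrank K (LinearMap.range (N ^ r)) = (d + 1 - r) * μ := by
  set f : ℕ → ℕ := fun r => finrank K (LinearMap.range (N ^ r)) with hf
  set g : ℕ → ℕ := fun r =>
    finrank K ((LinearMap.ker N ⊓ LinearMap.range (N ^ r)) : Submodule K V) with hg
  have hstep : ∀ r, f (r + 1) + g r = f r := fun r => rank_step N r
  have hrange_anti : ∀ {r s : ℕ}, r ≤ s →
      LinearMap.range (N ^ s) ≤ LinearMap.range (N ^ r) := by
    intro r s hrs
    have : N ^ s = (N ^ r) * (N ^ (s - r)) := by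
      rw [← pow_add, Nat.add_sub_cancel' hrs]
    rw [this, Module.End.mul_eq_comp]
    exact LinearMap.range_comp_le_range _ _
  have hg_anti : ∀ {r s : ℕ}, r ≤ s → g s ≤ g r := by
    intro r s hrs
    exact Submodule.finrank_mono (inf_le_inf_left _ (hrange_anti hrs))
  have hftop : f (d + 1) = 0 := by
    simp [hf, hN, finrank_bot]
  have hgd : g d = μ := by
    have h := hstep d
    have hfd : f d = μ := hrank
    omega
  have hgge : ∀ r ≤ d, μ ≤ g r := fun r hr => hgd ▸ hg_anti hr
  have hf0 : f 0 = (d + 1) * μ := by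
    show finrank K (LinearMap.range (N ^ 0)) = (d + 1) * μ
    rw [pow_zero, Module.End.one_eq_id, LinearMap.range_id, finrank_top]
    exact hdim
  -- upper bound
  have hupper : ∀ r ≤ d + 1, f r + r * μ ≤ (d + 1) * μ := by
    intro r
    induction r with
    | zero => intro _; simpa using hf0.le
    | succ n ih =>
      intro hn
      have h1 : n ≤ d := by omega
      have := hstep n
      have hgn := hgge n h1
      have ihn := ih (by omega)
      have : f (n + 1) + μ ≤ f n := by omega
      calc f (n + 1) + (n + 1) * μ = f (n + 1) + μ + n * μ := by ring
        _ ≤ f n + n * μ := by omega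
        _ ≤ (d + 1) * μ := ihn
  -- lower bound: f (d+1-k) ≥ k * μ
  have hlower : ∀ k ≤ d + 1, k * μ ≤ f (d + 1 - k) := by
    intro k
    induction k with
    | zero => intro _; simp
    | succ n ih =>
      intro hn
      have h1 : n ≤ d := by omega
      have h2 : d + 1 - (n + 1) = d - n := by omega
      have h3 : d + 1 - n = (d - n) + 1 := by omega
      have := hstep (d - n)
      have hgn := hgge (d - n) (by omega)
      have ihn := ih (by omega)
      rw [h3] at ihn
      rw [h2]
      calc (n + 1) * μ = n * μ + μ := by ring
        _ ≤ f (d - n + 1) + g (d - n) := by omega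
        _ = f (d - n) := hstep (d - n)
  intro r hr
  have h1 := hupper r hr
  have h2 := hlower (d + 1 - r) (by omega)
  have h3 : d + 1 - (d + 1 - r) = r := by omega
  rw [h3] at h2
  have hsum : (d + 1 - r) * μ + r * μ = (d + 1) * μ := by
    rw [← Nat.add_mul]
    congr 1
    omega
  show f r = (d + 1 - r) * μ
  omega
end

section
/- Let V be a finite-dimensional vector space over a field K, d ≥ 0, and N : V → V linear with N^{d+1} = 0, dim V = (d+1)·μ and rank(N^d) = μ. Then for every r with 0 ≤ r ≤ d+1, the image of N^r equals the kernel of N^{d+1−r}. -/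
theorem stmt1 {K V : Type*} [Field K] [AddCommGroup V] [Module K V]
    [FiniteDimensional K V] (d μ : ℕ) (N : V →ₗ[K] V)
    (hN : N ^ (d + 1) = 0)
    (hdim : Module.finrank K V = (d + 1) * μ)
    (hrank : Module.finrank K (LinearMap.range (N ^ d)) = μ) :
    ∀ r ≤ d + 1, LinearMap.range (N ^ r) = LinearMap.ker (N ^ (d + 1 - r)) := by
  -- range N^d ≤ ker N
  have hdk : LinearMap.range (N ^ d) ≤ LinearMap.ker N := by
    rintro x ⟨y, rfl⟩
    have : N ((N ^ d) y) = (N ^ (d + 1)) y := by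
      rw [pow_succ', Module.End.mul_apply]
    simp [LinearMap.mem_ker, this, hN]
  -- range N^d ≤ range N^k for k ≤ d
  have hmono : ∀ k ≤ d, LinearMap.range (N ^ d) ≤ LinearMap.range (N ^ k) := by
    intro k hk
    have : N ^ d = (N ^ k) * (N ^ (d - k)) := by rw [← pow_add]; congr 1; omega
    rw [this, Module.End.mul_eq_comp]
    exact LinearMap.range_comp_le_range _ _
  -- step: f (k+1) + μ ≤ f k for k ≤ d
  have step : ∀ k ≤ d, Module.finrank K (LinearMap.range (N ^ (k+1))) + μ ≤
      Module.finrank K (LinearMap.range (N ^ k)) := by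
    intro k hk
    set p := LinearMap.range (N ^ k) with hp
    have hrn := LinearMap.finrank_range_add_finrank_ker (N.domRestrict p)
    have hr1 : LinearMap.range (N.domRestrict p) = LinearMap.range (N ^ (k+1)) := by
      rw [LinearMap.range_domRestrict, hp, ← LinearMap.range_comp, ← Module.End.mul_eq_comp,
        ← pow_succ']
    have hker : Submodule.comap p.subtype (LinearMap.range (N ^ d)) ≤
        LinearMap.ker (N.domRestrict p) := by
      rw [LinearMap.ker_domRestrict]
      exact Submodule.comap_mono hdk
    have hμ : μ ≤ Module.finrank K (LinearMap.ker (N.domRestrict p)) := by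
      have hle : LinearMap.range (N ^ d) ≤ p := hmono k hk
      have e := Submodule.comapSubtypeEquivOfLe hle
      calc μ = Module.finrank K (LinearMap.range (N ^ d)) := hrank.symm
        _ = Module.finrank K (Submodule.comap p.subtype (LinearMap.range (N ^ d))) :=
            (LinearEquiv.finrank_eq e).symm
        _ ≤ _ := Submodule.finrank_mono hker
    have hfp : Module.finrank K p ≤ Module.finrank K (LinearMap.range (N ^ k)) := le_rfl
    rw [hr1] at hrn
    omega
  -- lower bound
  have lower : ∀ j r, r + j = d + 1 → j * μ ≤ Module.finrank K (LinearMap.range (N ^ r)) := by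
    intro j
    induction j with
    | zero => intro r _; simp
    | succ n ih =>
      intro r hr
      have h1 := step r (by omega)
      have h2 := ih (r+1) (by omega)
      calc (n+1) * μ = n * μ + μ := by ring
        _ ≤ Module.finrank K (LinearMap.range (N ^ (r+1))) + μ := by omega
        _ ≤ _ := step r (by omega)
  intro r hr
  have hsub : LinearMap.range (N ^ r) ≤ LinearMap.ker (N ^ (d + 1 - r)) := by
    rintro x ⟨y, rfl⟩
    have : (N ^ (d + 1 - r)) ((N ^ r) y) = (N ^ (d + 1)) y := by
      rw [← Module.End.mul_apply, ← pow_add]; congr 2; omega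
    simp [LinearMap.mem_ker, this, hN]
  refine Submodule.eq_of_le_of_finrank_le hsub ?_
  have hrn := LinearMap.finrank_range_add_finrank_ker (N ^ (d + 1 - r))
  have h1 := lower r (d + 1 - r) (by omega)
  have h2 := lower (d + 1 - r) r (by omega)
  have hV : Module.finrank K V = (d+1) * μ := hdim
  have h3 : r * μ + (d + 1 - r) * μ = (d + 1) * μ := by
    rw [← add_mul]; congr 1; omega
  linarith
end

section
/- Let K be a field equipped with a (additive, ℤ-valued) valuation v, let V = ⊕_{s=0}^{d} V_s be a finite-dimensional K-vector space, and let Φ : V → V be a K-linear bijection and N : V → V K-linear with N∘Φ = c·(Φ∘N) for a scalar c ∈ K with v(c) = w > 0. Suppose there exist m ≥ 1 and a scalar α ∈ K× such that Φ^m restricted to V_s is multiplication by α·c^{m·s} for each s. Then N(V_s) ⊆ V_{s−1} for all s ≥ 1 and N(V_0) = 0. -/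
/-!
Since `v c > 0`, the powers of `c` are pairwise distinct, so `c^m Φ^m` acts on the summands `V_t`
by the pairwise distinct scalars `α c^{m(t+1)}`. The relation `N Φ = c Φ N` gives
`N Φ^m = c^m Φ^m N`, so `N` maps `V_s` into the `α c^{ms}`-eigenspace of `c^m Φ^m`, which is
`V_{s-1}` for `s ≥ 1` and zero for `s = 0`.
-/

open DirectSum

theorem AddValuation.pow_injective_of_eq_coe_of_pos {R : Type*} [Ring R]
    (v : AddValuation R (WithTop ℤ)) {c : R} {w : ℤ} (hvc : v c = w) (hw : 0 < w) :
    Function.Injective (c ^ · : ℕ → R) := by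
  intro i j hij
  have hv : ((i * w : ℤ) : WithTop ℤ) = ((j * w : ℤ) : WithTop ℤ) := by
    simpa [v.map_pow, hvc, ← WithTop.coe_nsmul] using congrArg v hij
  exact_mod_cast mul_right_cancel₀ hw.ne' (WithTop.coe_eq_coe.mp hv)

theorem mul_pow_eq_smul_pow_mul {R A : Type*} [CommSemiring R] [Semiring A] [Algebra R A]
    {a b : A} {c : R} (h : b * a = c • (a * b)) (k : ℕ) :
    b * a ^ k = c ^ k • (a ^ k * b) := by
  induction k with
  | zero => simp
  | succ k ih =>
    rw [pow_succ, ← mul_assoc, ih, smul_mul_assoc, mul_assoc, h, mul_smul_comm, smul_smul,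
      ← pow_succ, ← mul_assoc, ← pow_succ]

section Decomposition

variable {ι R M : Type*} [DecidableEq ι]

theorem DirectSum.decompose_apply_eq_smul [Semiring R] [AddCommMonoid M] [Module R M]
    {Vs : ι → Submodule R M} [Decomposition Vs] {f : Module.End R M} {ev : ι → R}
    (hf : ∀ i, ∀ x ∈ Vs i, f x = ev i • x) (y : M) (i : ι) :
    (decompose Vs (f y) i : M) = ev i • (decompose Vs y i : M) := by
  induction y using DirectSum.Decomposition.inductionOn Vs with
  | zero => simp
  | add y y' hy hy' => simp [hy, hy']
  | @homogeneous j x =>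
    rw [hf j x x.2, decompose_smul]
    by_cases hij : j = i
    · subst hij; simp [DirectSum.smul_apply]
    · simp [DirectSum.smul_apply, of_eq_of_ne _ _ _ (Ne.symm hij)]

variable [Ring R] [IsDomain R] [AddCommGroup M] [Module R M] [Module.IsTorsionFree R M]
    {Vs : ι → Submodule R M} [Decomposition Vs] {f : Module.End R M} {ev : ι → R}

theorem DirectSum.decompose_eq_zero_of_apply_eq_smul
    (hf : ∀ i, ∀ x ∈ Vs i, f x = ev i • x) {y : M} {μ : R} (hy : f y = μ • y) {i : ι}
    (hi : ev i ≠ μ) : (decompose Vs y i : M) = 0 := by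
  have h := decompose_apply_eq_smul hf y i
  rw [hy, decompose_smul, DirectSum.smul_apply, Submodule.coe_smul] at h
  have : (ev i - μ) • (decompose Vs y i : M) = 0 := by
    rw [sub_smul, h, sub_self]
  exact (smul_eq_zero_iff_right (sub_ne_zero.mpr hi)).mp this

theorem DirectSum.mem_of_apply_eq_smul (hev : Function.Injective ev)
    (hf : ∀ i, ∀ x ∈ Vs i, f x = ev i • x) {y : M} {i : ι} (hy : f y = ev i • y) : y ∈ Vs i := by
  have hdec : decompose Vs y = DirectSum.of _ i (decompose Vs y i) := by
    ext j
    by_cases hji : j = i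
    · subst hji; simp
    · rw [of_eq_of_ne _ _ _ hji, ZeroMemClass.coe_zero,
        decompose_eq_zero_of_apply_eq_smul hf hy (hev.ne hji)]
  rw [← (decompose Vs).symm_apply_apply y, hdec, decompose_symm_of]
  exact SetLike.coe_mem _

theorem DirectSum.eq_zero_of_apply_eq_smul (hf : ∀ i, ∀ x ∈ Vs i, f x = ev i • x) {y : M} {μ : R}
    (hy : f y = μ • y) (hμ : μ ∉ Set.range ev) : y = 0 := by
  have hdec : decompose Vs y = 0 := by
    ext i
    simpa using decompose_eq_zero_of_apply_eq_smul hf hy fun h ↦ hμ ⟨i, h⟩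
  simpa using congrArg (decompose Vs).symm hdec

end Decomposition

theorem stmt3_general {K V : Type*} [Field K] [AddCommGroup V] [Module K V]
    (d : ℕ) (Vs : Fin (d + 1) → Submodule K V)
    (hVs : DirectSum.IsInternal Vs)
    (Φ N : V →ₗ[K] V)
    (c : K) (hrel : N ∘ₗ Φ = c • (Φ ∘ₗ N))
    (v : AddValuation K (WithTop ℤ)) (w : ℤ)
    (hvc : v c = (w : WithTop ℤ)) (hw : 0 < w)
    (m : ℕ) (hm : 1 ≤ m) (α : K) (hα : α ≠ 0)
    (hΦm : ∀ s : Fin (d + 1), ∀ x ∈ Vs s,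
      (Φ ^ m) x = (α * c ^ (m * (s : ℕ))) • x) :
    (∀ s t : Fin (d + 1), (s : ℕ) = (t : ℕ) + 1 →
      ∀ x ∈ Vs s, N x ∈ Vs t) ∧
    (∀ x ∈ Vs ⟨0, Nat.succ_pos d⟩, N x = 0) := by
  classical
  let := hVs.chooseDecomposition
  have hpow := v.pow_injective_of_eq_coe_of_pos hvc hw
  set ev : Fin (d + 1) → K := fun t ↦ α * c ^ (m * ((t : ℕ) + 1))
  have hf : ∀ t, ∀ x ∈ Vs t, (c ^ m • Φ ^ m) x = ev t • x := fun t x hx ↦ by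
    rw [LinearMap.smul_apply, hΦm t x hx, smul_smul]
    congr 1
    ring
  have hev : Function.Injective ev := fun t t' h ↦ by
    have hmt : m * ((t : ℕ) + 1) = m * ((t' : ℕ) + 1) := hpow (mul_left_cancel₀ hα h)
    exact Fin.ext (by simpa [Nat.pos_iff_ne_zero.mp hm] using hmt)
  have hN : ∀ s, ∀ x ∈ Vs s, (c ^ m • Φ ^ m) (N x) = (α * c ^ (m * (s : ℕ))) • N x :=
    fun s x hx ↦ calc
      (c ^ m • Φ ^ m) (N x) = (N * Φ ^ m) x := by rw [mul_pow_eq_smul_pow_mul hrel m]; rfl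
      _ = (α * c ^ (m * (s : ℕ))) • N x := by rw [Module.End.mul_apply, hΦm s x hx, map_smul]
  refine ⟨fun s t hst x hx ↦ mem_of_apply_eq_smul hev hf ?_, fun x hx ↦
    eq_zero_of_apply_eq_smul hf (hN _ x hx) ?_⟩
  · simpa [ev, hst] using hN s x hx
  · rintro ⟨t, ht⟩
    have hm0 : m * ((t : ℕ) + 1) = m * 0 := hpow (mul_left_cancel₀ hα ht)
    rcases Nat.mul_eq_zero.mp (hm0.trans (mul_zero m)) with h | h <;> omega

theorem stmt3 {K V : Type*} [Field K] [AddCommGroup V] [Module K V]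
    (d : ℕ) (Vs : Fin (d + 1) → Submodule K V)
    (hVs : DirectSum.IsInternal Vs)
    (Φ N : V →ₗ[K] V) (hΦ : Function.Bijective Φ)
    (c : K) (hrel : N ∘ₗ Φ = c • (Φ ∘ₗ N))
    (v : AddValuation K (WithTop ℤ)) (w : ℤ)
    (hvc : v c = (w : WithTop ℤ)) (hw : 0 < w)
    (m : ℕ) (hm : 1 ≤ m) (α : K) (hα : α ≠ 0)
    (hΦm : ∀ s : Fin (d + 1), ∀ x ∈ Vs s,
      (Φ ^ m) x = (α * c ^ (m * (s : ℕ))) • x) :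
    (∀ s t : Fin (d + 1), (s : ℕ) = (t : ℕ) + 1 →
      ∀ x ∈ Vs s, N x ∈ Vs t) ∧
    (∀ x ∈ Vs ⟨0, Nat.succ_pos d⟩, N x = 0) :=
  stmt3_general d Vs hVs Φ N c hrel v w hvc hw m hm α hα hΦm
end

section
/- Fix d ≥ 1. Let μ = (μ_1, ..., μ_d) be a tuple of integers with μ_1 ≥ μ_2 ≥ ... ≥ μ_d. For a tuple λ = (λ_0, ..., λ_d) of integers with λ_0 ≥ ... ≥ λ_d and an index 0 ≤ j ≤ d, define μ(λ(j)) = (λ_0 − λ_j + j + 1, ..., λ_{j−1} − λ_j + j + 1, λ_{j+1} − λ_j + j, ..., λ_d − λ_j + j). Then there exist j ∈ {0,...,d} and λ with λ_d = 0 such that μ = μ(λ(j)) if and only if μ_s ≠ s for all 1 ≤ s ≤ d. Moreover, in that case the pair (j, λ) with λ_d = 0 is unique, and j is the largest index in {0,...,d} with μ_j ≥ j + 1 (with the convention μ_0 = +∞). -/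
/-!
Since `muOf lam j k = lam (j.succAbove k) - lam j + j + [k < j]` and `lam` is antitone, the
first `j` entries of `μ(λ(j))` are `≥ j + 1` and the others are `≤ j`. Such a split index of `μ`
is unique, forces `μ_s ≠ s`, and is the largest `j` with `μ_j ≥ j + 1` (indices 1-based as in
the paper). Conversely, if `μ_s ≠ s` for all `s`, the first `s` with `μ_s < s` (or `d + 1`)
gives the split index `s - 1`, and `λ` is recovered by inserting `0` at position `j` into
`k ↦ μ k - j - [k < j]` and shifting so that `λ_d = 0`; as `muOf` only sees the differences
`λ_i - λ_j`, this `λ` is unique.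
-/

/-- The tuple `μ(λ(j))` associated with a weakly decreasing tuple
`λ = (λ_0, ..., λ_d)` and an index `0 ≤ j ≤ d`: its entry at (1-based)
position `s` is `λ_{s-1} - λ_j + j + 1` for `s ≤ j` and `λ_s - λ_j + j`
for `s > j`. -/
def muOf {d : ℕ} (lam : Fin (d + 1) → ℤ) (j : Fin (d + 1)) : Fin d → ℤ :=
  fun k =>
    if (k : ℕ) < (j : ℕ) then lam k.castSucc - lam j + ((j : ℕ) : ℤ) + 1
    else lam k.succ - lam j + ((j : ℕ) : ℤ)

theorem Fin.antitone_insertNth {α : Type*} [Preorder α] {n : ℕ} {j : Fin (n + 1)} {c : α}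
    {f : Fin n → α} (hf : Antitone f) (hlt : ∀ k, j.succAbove k < j → c ≤ f k)
    (hgt : ∀ k, j < j.succAbove k → f k ≤ c) : Antitone (j.insertNth c f) := by
  intro a b hab
  induction a using j.succAboveCases <;> induction b using j.succAboveCases <;>
    simp only [Fin.insertNth_apply_same, Fin.insertNth_apply_succAbove, le_refl]
  case p.x k => exact hlt k (lt_of_le_of_ne hab (Fin.succAbove_ne j k))
  case x.p k => exact hgt k (lt_of_le_of_ne hab (Fin.succAbove_ne j k).symm)
  case p.p k l => exact hf (Fin.succAbove_le_succAbove_iff.mp hab)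

variable {d : ℕ}

theorem muOf_apply_eq_succAbove (lam : Fin (d + 1) → ℤ) (j : Fin (d + 1)) (k : Fin d) :
    muOf lam j k = lam (j.succAbove k) - lam j + j + if (k : ℕ) < j then 1 else 0 := by
  unfold muOf
  split_ifs with h
  · rw [Fin.succAbove_of_castSucc_lt _ _ (Fin.lt_def.mpr h)]
  · rw [Fin.succAbove_of_le_castSucc _ _ (Fin.le_def.mpr (not_lt.mp h))]; simp

theorem muOf_add_const (lam : Fin (d + 1) → ℤ) (j : Fin (d + 1)) (c : ℤ) :
    muOf (fun i => lam i + c) j = muOf lam j := by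
  funext k
  simp only [muOf_apply_eq_succAbove]
  ring

theorem eq_of_muOf_eq_of_apply_last_eq (j : Fin (d + 1)) {lam₁ lam₂ : Fin (d + 1) → ℤ}
    (h : muOf lam₁ j = muOf lam₂ j) (hlast : lam₁ (Fin.last d) = lam₂ (Fin.last d)) :
    lam₁ = lam₂ := by
  have hdiff : ∀ i, lam₁ i - lam₁ j = lam₂ i - lam₂ j := by
    intro i
    induction i using j.succAboveCases with
    | x => simp
    | p k =>
      have := congrFun h k
      simp only [muOf_apply_eq_succAbove] at this
      linarith
  funext i
  linarith [hdiff i, hdiff (Fin.last d)]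

def lamOf (μ : Fin d → ℤ) (j : Fin (d + 1)) : Fin (d + 1) → ℤ :=
  j.insertNth 0 fun k => μ k - j - if (k : ℕ) < j then 1 else 0

theorem muOf_lamOf (μ : Fin d → ℤ) (j : Fin (d + 1)) : muOf (lamOf μ j) j = μ := by
  funext k
  simp only [muOf_apply_eq_succAbove, lamOf, Fin.insertNth_apply_same,
    Fin.insertNth_apply_succAbove]
  ring

def IsSplitIndex (μ : Fin d → ℤ) (j : Fin (d + 1)) : Prop :=
  ∀ k : Fin d, ((k : ℕ) < j → (j : ℤ) + 1 ≤ μ k) ∧ ((j : ℕ) ≤ k → μ k ≤ j)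

theorem isSplitIndex_muOf {lam : Fin (d + 1) → ℤ} (hlam : Antitone lam) (j : Fin (d + 1)) :
    IsSplitIndex (muOf lam j) j := by
  intro k
  constructor <;> intro hk
  · have : lam j ≤ lam k.castSucc := hlam (Fin.le_def.mpr (by simp; omega))
    simp only [muOf, if_pos hk]
    linarith
  · have : lam k.succ ≤ lam j := hlam (Fin.le_def.mpr (by simp; omega))
    simp only [muOf, if_neg (not_lt.mpr hk)]
    linarith

theorem exists_isSplitIndex {μ : Fin d → ℤ} (hμ : Antitone μ)
    (hne : ∀ s : Fin d, μ s ≠ (s : ℕ) + 1) : ∃ j, IsSplitIndex μ j := by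
  have hP : ∃ n : ℕ, ∀ h : n < d, μ ⟨n, h⟩ ≤ n := ⟨d, fun h => absurd h (lt_irrefl d)⟩
  obtain ⟨m, hm, hmin⟩ : ∃ m : ℕ, (∀ h : m < d, μ ⟨m, h⟩ ≤ m) ∧
      ∀ n < m, ¬ ∀ h : n < d, μ ⟨n, h⟩ ≤ n :=
    ⟨Nat.find hP, Nat.find_spec hP, fun _ => Nat.find_min hP⟩
  have hmd : m ≤ d := by
    by_contra! hdm
    exact hmin d hdm fun h => absurd h (lt_irrefl d)
  refine ⟨⟨m, Nat.lt_succ_of_le hmd⟩, fun k => ⟨fun hk => ?_, fun hk => ?_⟩⟩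
  · -- `m - 1` fails the defining property of `m`, and `μ (m - 1) = m` is excluded
    obtain ⟨hlt, hgt⟩ := not_forall.mp (hmin (m - 1) (by simp at hk; omega))
    have := hne ⟨m - 1, hlt⟩
    have : μ ⟨m - 1, hlt⟩ ≤ μ k := hμ (Fin.le_def.mpr (by simp at hk ⊢; omega))
    simp only at *
    omega
  · have hmk : m < d := by simp at hk; omega
    have : μ k ≤ μ ⟨m, hmk⟩ := hμ (Fin.le_def.mpr (by simpa using hk))
    have := hm hmk
    simp only at *
    omega

namespace IsSplitIndex

variable {μ : Fin d → ℤ} {j : Fin (d + 1)}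

theorem ne_succ (h : IsSplitIndex μ j) (s : Fin d) : μ s ≠ (s : ℕ) + 1 := by
  rcases lt_or_ge (s : ℕ) j with hs | hs
  · have := (h s).1 hs; omega
  · have := (h s).2 hs; omega

theorem unique {j' : Fin (d + 1)} (h : IsSplitIndex μ j) (h' : IsSplitIndex μ j') : j = j' := by
  by_contra hne
  wlog hlt : (j : ℕ) < j' generalizing j j'
  · exact this h' h (Ne.symm hne) (by omega)
  have hk : (j : ℕ) < d := by omega
  have := (h ⟨j, hk⟩).2 le_rfl
  have := (h' ⟨j, hk⟩).1 hlt
  omega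

theorem isGreatest (h : IsSplitIndex μ j) :
    IsGreatest {j' : Fin (d + 1) | ∀ i : Fin d, (i : ℕ) + 1 = j' → (j' : ℤ) + 1 ≤ μ i} j := by
  refine ⟨fun i hi => (h i).1 (by omega), fun j' hj' => ?_⟩
  by_contra! hlt
  have hi : (j' : ℕ) - 1 < d := by omega
  have := hj' ⟨(j' : ℕ) - 1, hi⟩ (by simp; omega)
  have := (h ⟨(j' : ℕ) - 1, hi⟩).2 (by simp; omega)
  omega

theorem antitone_lamOf (h : IsSplitIndex μ j) (hμ : Antitone μ) : Antitone (lamOf μ j) := by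
  apply Fin.antitone_insertNth
  · intro k l hkl
    have := hμ hkl
    have := h k
    have := h l
    have : (k : ℕ) ≤ l := hkl
    dsimp only
    split_ifs <;> omega
  · intro k hk
    have hk : (k : ℕ) < j := by
      rwa [Fin.succAbove_lt_iff_castSucc_lt, Fin.lt_def, Fin.val_castSucc] at hk
    simp only [if_pos hk]
    linarith [(h k).1 hk]
  · intro k hk
    have hk : (j : ℕ) ≤ k := by
      rwa [Fin.lt_succAbove_iff_le_castSucc, Fin.le_def, Fin.val_castSucc] at hk
    simp only [if_neg (not_lt.mpr hk)]
    linarith [(h k).2 hk]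

end IsSplitIndex

theorem stmt6_general {d : ℕ} (μ : Fin d → ℤ) (hμ : Antitone μ) :
    ((∃ (j : Fin (d + 1)) (lam : Fin (d + 1) → ℤ),
        Antitone lam ∧ lam (Fin.last d) = 0 ∧ μ = muOf lam j) ↔
      ∀ s : Fin d, μ s ≠ ((s : ℕ) : ℤ) + 1) ∧
    (∀ (j₁ j₂ : Fin (d + 1)) (lam₁ lam₂ : Fin (d + 1) → ℤ),
      Antitone lam₁ → lam₁ (Fin.last d) = 0 → μ = muOf lam₁ j₁ →
      Antitone lam₂ → lam₂ (Fin.last d) = 0 → μ = muOf lam₂ j₂ →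
      j₁ = j₂ ∧ lam₁ = lam₂) ∧
    (∀ (j : Fin (d + 1)) (lam : Fin (d + 1) → ℤ),
      Antitone lam → lam (Fin.last d) = 0 → μ = muOf lam j →
      (∀ i : Fin d, (i : ℕ) + 1 = (j : ℕ) → ((j : ℕ) : ℤ) + 1 ≤ μ i) ∧
      ∀ j' : Fin (d + 1),
        (∀ i : Fin d, (i : ℕ) + 1 = (j' : ℕ) → ((j' : ℕ) : ℤ) + 1 ≤ μ i) →
        j' ≤ j) := by
  refine ⟨⟨?_, fun hne => ?_⟩, ?_, ?_⟩
  · rintro ⟨j, lam, hlam, -, rfl⟩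
    exact (isSplitIndex_muOf hlam j).ne_succ
  · obtain ⟨j, hj⟩ := exists_isSplitIndex hμ hne
    refine ⟨j, fun i => lamOf μ j i + -lamOf μ j (Fin.last d),
      (hj.antitone_lamOf hμ).add_const _, add_neg_cancel _, ?_⟩
    rw [muOf_add_const, muOf_lamOf]
  · rintro j₁ j₂ lam₁ lam₂ hlam₁ hlast₁ rfl hlam₂ hlast₂ he
    obtain rfl := (isSplitIndex_muOf hlam₁ j₁).unique (he ▸ isSplitIndex_muOf hlam₂ j₂)
    exact ⟨rfl, eq_of_muOf_eq_of_apply_last_eq j₁ he (hlast₁.trans hlast₂.symm)⟩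
  · rintro j lam hlam - rfl
    exact (isSplitIndex_muOf hlam j).isGreatest

theorem stmt6 {d : ℕ} (hd : 1 ≤ d) (μ : Fin d → ℤ) (hμ : Antitone μ) :
    ((∃ (j : Fin (d + 1)) (lam : Fin (d + 1) → ℤ),
        Antitone lam ∧ lam (Fin.last d) = 0 ∧ μ = muOf lam j) ↔
      ∀ s : Fin d, μ s ≠ ((s : ℕ) : ℤ) + 1) ∧
    (∀ (j₁ j₂ : Fin (d + 1)) (lam₁ lam₂ : Fin (d + 1) → ℤ),
      Antitone lam₁ → lam₁ (Fin.last d) = 0 → μ = muOf lam₁ j₁ →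
      Antitone lam₂ → lam₂ (Fin.last d) = 0 → μ = muOf lam₂ j₂ →
      j₁ = j₂ ∧ lam₁ = lam₂) ∧
    (∀ (j : Fin (d + 1)) (lam : Fin (d + 1) → ℤ),
      Antitone lam → lam (Fin.last d) = 0 → μ = muOf lam j →
      (∀ i : Fin d, (i : ℕ) + 1 = (j : ℕ) → ((j : ℕ) : ℤ) + 1 ≤ μ i) ∧
      ∀ j' : Fin (d + 1),
        (∀ i : Fin d, (i : ℕ) + 1 = (j' : ℕ) → ((j' : ℕ) : ℤ) + 1 ≤ μ i) →
        j' ≤ j) :=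
  stmt6_general μ hμ
end

section
/- Let V_1, ..., V_n be subspaces of a vector space V over a field of characteristic zero with V = V_1 ⊕ ... ⊕ V_n, and let p_i : V → V be the projection onto ⊕_{j≠i} V_j killing V_i. Consider the induced maps Λ^n(p_i) on the n-th exterior power Λ^n(V). Then the operators Λ^n(p_i) pairwise commute, the operator e = ∏_{i=1}^{n} (id − Λ^n(p_i)) is idempotent, and the image of e equals the subspace of Λ^n(V) spanned by all wedges v_1 ∧ v_2 ∧ ... ∧ v_n with v_i ∈ V_i. -/
/-!
The wedges `v₁ ∧ ⋯ ∧ vₙ` with each `v_k` in some summand `V_{f k}` span `Λⁿ V`, and each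
of them is a common eigenvector of all `Λⁿ pᵢ`: the eigenvalue is `0` if `i` lies in the
range of `f` and `1` otherwise. Hence the `Λⁿ pᵢ` commute, and `∏ (1 - Λⁿ pᵢ)` fixes such a
wedge when `f` is surjective and kills it otherwise. So the product is idempotent and its
image is spanned by the wedges with `f` a permutation, which up to sign are the wedges with
`v_i ∈ V_i`.
-/

open ExteriorAlgebra Submodule

section OneSubProd

variable {R M ι : Type*} [Semiring R] [AddCommGroup M] [Module R M]

theorem commute_of_forall_apply_eq_zero_or_self {T : ι → Module.End R M} {S : Set M}
    (hS : span R S = ⊤) (hT : ∀ x ∈ S, ∀ i, T i x = 0 ∨ T i x = x) (i j : ι) :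
    Commute (T i) (T j) := by
  refine LinearMap.ext_on hS fun x hx => ?_
  rcases hT x hx i with hi | hi <;> rcases hT x hx j with hj | hj <;>
    simp [Module.End.mul_apply, hi, hj]

open Classical in
theorem list_prod_map_one_sub_apply (T : ι → Module.End R M) {x : M}
    (hx : ∀ i, T i x = 0 ∨ T i x = x) (l : List ι) :
    (l.map fun i => 1 - T i).prod x = if ∀ i ∈ l, T i x = 0 then x else 0 := by
  induction l with
  | nil => simp
  | cons a l ih =>
    rw [List.map_cons, List.prod_cons, Module.End.mul_apply, ih]
    split_ifs <;> rcases hx a with ha | ha <;> simp_all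

variable {n : ℕ} {T : Fin n → Module.End R M}

open Classical in
theorem ofFn_prod_one_sub_apply {x : M} (hx : ∀ i, T i x = 0 ∨ T i x = x) :
    (List.ofFn fun i => 1 - T i).prod x = if ∀ i, T i x = 0 then x else 0 := by
  simp [List.ofFn_eq_map, list_prod_map_one_sub_apply T hx]

theorem isIdempotentElem_ofFn_prod_one_sub {S : Set M} (hS : span R S = ⊤)
    (hT : ∀ x ∈ S, ∀ i, T i x = 0 ∨ T i x = x) :
    IsIdempotentElem (List.ofFn fun i => 1 - T i).prod := by
  refine LinearMap.ext_on hS fun x hx => ?_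
  rw [Module.End.mul_apply, ofFn_prod_one_sub_apply (hT x hx)]
  split_ifs with h
  · rw [ofFn_prod_one_sub_apply (hT x hx), if_pos h]
  · exact map_zero _

theorem range_ofFn_prod_one_sub {S : Set M} (hS : span R S = ⊤)
    (hT : ∀ x ∈ S, ∀ i, T i x = 0 ∨ T i x = x) :
    LinearMap.range (List.ofFn fun i => 1 - T i).prod = span R {x ∈ S | ∀ i, T i x = 0} := by
  rw [LinearMap.range_eq_map, ← hS, map_span]
  apply le_antisymm
  · rw [span_le]
    rintro _ ⟨x, hx, rfl⟩
    rw [ofFn_prod_one_sub_apply (hT x hx)]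
    split_ifs with h
    · exact subset_span ⟨hx, h⟩
    · exact zero_mem _
  · refine span_mono fun x ⟨hx, h⟩ => ⟨x, hx, ?_⟩
    rw [ofFn_prod_one_sub_apply (hT x hx), if_pos h]

end OneSubProd

section SummandWedges

variable {R V ι : Type*} [CommRing R] [AddCommGroup V] [Module R V] {n : ℕ}

def summandWedges (Vs : ι → Submodule R V) (n : ℕ) : Set (⋀[R]^n V) :=
  {x | ∃ (v : Fin n → V) (f : Fin n → ι),
    (∀ k, v k ∈ Vs (f k)) ∧ exteriorPower.ιMulti R n v = x}

theorem span_summandWedges {Vs : ι → Submodule R V} (hVs : ⨆ i, Vs i = ⊤) :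
    span R (summandWedges Vs n) = ⊤ := by
  rw [iSup_eq_span] at hVs
  refine top_unique ((exteriorPower.ιMulti_span_of_span R n V hVs).ge.trans (span_mono ?_))
  rintro _ ⟨v, hv, rfl⟩
  choose f hf using fun k => Set.mem_iUnion.mp (hv ⟨k, rfl⟩)
  exact ⟨v, f, hf, rfl⟩

open Classical in
theorem apply_ιMulti_eq_ite {Vs : ι → Submodule R V} {p : ι → V →ₗ[R] V}
    {Λp : ι → Module.End R (⋀[R]^n V)} (hker : ∀ i, ∀ x ∈ Vs i, p i x = 0)
    (hid : ∀ i j, i ≠ j → ∀ x ∈ Vs j, p i x = x)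
    (hΛp : ∀ i v, Λp i (exteriorPower.ιMulti R n v) = exteriorPower.ιMulti R n (p i ∘ v))
    {v : Fin n → V} {f : Fin n → ι} (hv : ∀ k, v k ∈ Vs (f k)) (i : ι) :
    Λp i (exteriorPower.ιMulti R n v) =
      if i ∈ Set.range f then 0 else exteriorPower.ιMulti R n v := by
  rw [hΛp]
  split_ifs with hi
  · obtain ⟨k, rfl⟩ := hi
    exact (exteriorPower.ιMulti R n).map_coord_zero k (hker _ _ (hv k))
  · congr 1
    funext k
    exact hid i (f k) (fun h => hi ⟨k, h.symm⟩) _ (hv k)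

def diagonalSummandWedges (Vs : Fin n → Submodule R V) : Set (⋀[R]^n V) :=
  {x | ∃ w : Fin n → V, (∀ i, w i ∈ Vs i) ∧ (x : ExteriorAlgebra R V) = ιMulti R n w}

theorem ιMulti_mem_span_of_perm {Vs : Fin n → Submodule R V} {v : Fin n → V}
    (σ : Equiv.Perm (Fin n)) (hv : ∀ k, v k ∈ Vs (σ k)) :
    exteriorPower.ιMulti R n v ∈ span R (diagonalSummandWedges Vs) := by
  have hw : ∀ i, (v ∘ σ.symm) i ∈ Vs i := fun i => by simpa using hv (σ.symm i)
  have hperm := (exteriorPower.ιMulti R n).map_perm (v ∘ σ.symm) σ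
  rw [Function.comp_assoc, σ.symm_comp_self, Function.comp_id] at hperm
  rw [hperm]
  exact smul_of_tower_mem _ _ (subset_span ⟨_, hw, rfl⟩)

theorem span_summandWedges_forall_apply_eq_zero {Vs : Fin n → Submodule R V}
    {p : Fin n → V →ₗ[R] V}
    {Λp : Fin n → Module.End R (⋀[R]^n V)} (hker : ∀ i, ∀ x ∈ Vs i, p i x = 0)
    (hid : ∀ i j, i ≠ j → ∀ x ∈ Vs j, p i x = x)
    (hΛp : ∀ i v, Λp i (exteriorPower.ιMulti R n v) = exteriorPower.ιMulti R n (p i ∘ v)) :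
    span R {x ∈ summandWedges Vs n | ∀ i, Λp i x = 0} = span R (diagonalSummandWedges Vs) := by
  apply le_antisymm
  · rw [span_le]
    rintro _ ⟨⟨v, f, hv, rfl⟩, hzero⟩
    by_cases hf : Function.Surjective f
    · exact ιMulti_mem_span_of_perm (.ofBijective f hf.bijective_of_finite) hv
    · obtain ⟨i, hi⟩ := not_forall.mp hf
      have h := hzero i
      rw [apply_ιMulti_eq_ite hker hid hΛp hv, if_neg (by simpa using hi)] at h
      rw [SetLike.mem_coe, h]
      exact zero_mem _
  · refine span_mono ?_
    rintro x ⟨w, hw, hx⟩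
    obtain rfl : exteriorPower.ιMulti R n w = x := Subtype.ext hx.symm
    exact ⟨⟨w, id, hw, rfl⟩, fun i => by
      rw [apply_ιMulti_eq_ite hker hid hΛp (f := id) hw, if_pos ⟨i, rfl⟩]⟩

end SummandWedges

theorem stmt9_general {K V : Type*} [Field K] [AddCommGroup V] [Module K V]
    (n : ℕ) (Vs : Fin n → Submodule K V) (hVs : DirectSum.IsInternal Vs)
    (p : Fin n → (V →ₗ[K] V))
    (hker : ∀ i, ∀ x ∈ Vs i, p i x = 0)
    (hid : ∀ i j, i ≠ j → ∀ x ∈ Vs j, p i x = x)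
    -- `Λp i` is the endomorphism of the `n`-th exterior power induced by `p i`,
    -- characterized by its effect on wedges `v_1 ∧ ... ∧ v_n`:
    (Λp : Fin n → (↥(⋀[K]^n V) →ₗ[K] ↥(⋀[K]^n V)))
    (hΛp : ∀ (i : Fin n) (v : Fin n → V),
      ((Λp i ⟨ιMulti K n v, ιMulti_range K n (Set.mem_range_self v)⟩ :
          ↥(⋀[K]^n V)) : ExteriorAlgebra K V) =
        ιMulti K n (fun k => p i (v k))) :
    (∀ i j : Fin n, Commute (Λp i) (Λp j)) ∧
    IsIdempotentElem
      ((List.ofFn (fun i : Fin n =>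
        (1 : Module.End K ↥(⋀[K]^n V)) - Λp i)).prod) ∧
    LinearMap.range
        ((List.ofFn (fun i : Fin n =>
          (1 : Module.End K ↥(⋀[K]^n V)) - Λp i)).prod) =
      Submodule.span K
        {x : ↥(⋀[K]^n V) | ∃ v : Fin n → V,
          (∀ i, v i ∈ Vs i) ∧ (x : ExteriorAlgebra K V) = ιMulti K n v} := by
  have hΛp' : ∀ i v, Λp i (exteriorPower.ιMulti K n v) = exteriorPower.ιMulti K n (p i ∘ v) :=
    fun i v => Subtype.ext (hΛp i v)
  have hspan := span_summandWedges (n := n) hVs.submodule_iSup_eq_top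
  have heigen : ∀ x ∈ summandWedges Vs n, ∀ i, Λp i x = 0 ∨ Λp i x = x := by
    rintro _ ⟨v, f, hv, rfl⟩ i
    rw [apply_ιMulti_eq_ite hker hid hΛp' hv]
    split_ifs <;> simp
  exact ⟨commute_of_forall_apply_eq_zero_or_self hspan heigen,
    isIdempotentElem_ofFn_prod_one_sub hspan heigen,
    (range_ofFn_prod_one_sub hspan heigen).trans
      (span_summandWedges_forall_apply_eq_zero hker hid hΛp')⟩

theorem stmt9 {K V : Type*} [Field K] [CharZero K] [AddCommGroup V] [Module K V]
    (n : ℕ) (Vs : Fin n → Submodule K V) (hVs : DirectSum.IsInternal Vs)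
    (p : Fin n → (V →ₗ[K] V))
    (hker : ∀ i, ∀ x ∈ Vs i, p i x = 0)
    (hid : ∀ i j, i ≠ j → ∀ x ∈ Vs j, p i x = x)
    -- `Λp i` is the endomorphism of the `n`-th exterior power induced by `p i`,
    -- characterized by its effect on wedges `v_1 ∧ ... ∧ v_n`:
    (Λp : Fin n → (↥(⋀[K]^n V) →ₗ[K] ↥(⋀[K]^n V)))
    (hΛp : ∀ (i : Fin n) (v : Fin n → V),
      ((Λp i ⟨ιMulti K n v, ιMulti_range K n (Set.mem_range_self v)⟩ :
          ↥(⋀[K]^n V)) : ExteriorAlgebra K V) =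
        ιMulti K n (fun k => p i (v k))) :
    (∀ i j : Fin n, Commute (Λp i) (Λp j)) ∧
    IsIdempotentElem
      ((List.ofFn (fun i : Fin n =>
        (1 : Module.End K ↥(⋀[K]^n V)) - Λp i)).prod) ∧
    LinearMap.range
        ((List.ofFn (fun i : Fin n =>
          (1 : Module.End K ↥(⋀[K]^n V)) - Λp i)).prod) =
      Submodule.span K
        {x : ↥(⋀[K]^n V) | ∃ v : Fin n → V,
          (∀ i, v i ∈ Vs i) ∧ (x : ExteriorAlgebra K V) = ιMulti K n v} :=
  stmt9_general n Vs hVs p hker hid Λp hΛp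
end
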